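/- Let R = K[[X, Y]]/(XY, Y²) where K is a field, and let x, y denote the images of X, Y. Then the set of trace ideals of R is exactly {0, (y), (x, y), R}. -/

import Mathlib

/-!
Let `m = (x, y)`. Since `y·m = 0`, a nonzero ideal inside `(y)` contains `y` and is `(y)`. An ideal
`I ⊄ (y)` has nonzero, hence free, image in the discrete valuation ring `R ⧸ (y) ≅ K⟦X⟧`, so `I`
surjects onto `R ⧸ (y)` and its trace contains `ann(y) = m`; a proper trace ideal `I ⊄ (y)` is
therefore `m`. Conversely `tr(I) ⊆ ann(ann(I))`, which equals `I` for `I = (y)` and `I = m` because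
`ann(x) = (y)` and `ann(y) = m`.
-/

/-- The trace ideal of an `R`-module `M`. -/
def traceIdeal (R : Type*) [CommRing R] (M : Type*) [AddCommGroup M] [Module R M] : Ideal R :=
  ⨆ f : M →ₗ[R] R, LinearMap.range f

open Ideal IsLocalRing MvPowerSeries

section TraceIdeal

variable {R M N : Type*} [CommRing R] [AddCommGroup M] [Module R M] [AddCommGroup N] [Module R N]

lemma apply_mem_traceIdeal (f : M →ₗ[R] R) (m : M) : f m ∈ traceIdeal R M :=
  Submodule.mem_iSup_of_mem f ⟨m, rfl⟩

lemma le_traceIdeal (I : Ideal R) : I ≤ traceIdeal R I :=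
  fun a ha => apply_mem_traceIdeal I.subtype ⟨a, ha⟩

lemma traceIdeal_eq_self_iff {I : Ideal R} : traceIdeal R I = I ↔ traceIdeal R I ≤ I :=
  ⟨le_of_eq, fun h => le_antisymm h (le_traceIdeal I)⟩

lemma traceIdeal_le_annihilator_annihilator (I : Ideal R) :
    traceIdeal R I ≤ I.annihilator.annihilator := by
  refine iSup_le fun f => ?_
  rintro _ ⟨w, rfl⟩
  refine Submodule.mem_annihilator.mpr fun b hb => ?_
  have hbw : b • w = 0 :=
    Subtype.ext (by simpa [mul_comm] using Submodule.mem_annihilator.mp hb w w.2)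
  rw [smul_eq_mul, mul_comm, ← smul_eq_mul, ← map_smul, hbw, map_zero]

lemma traceIdeal_le_of_surjective (g : M →ₗ[R] N) (hg : Function.Surjective g) :
    traceIdeal R N ≤ traceIdeal R M := by
  refine iSup_le fun f => ?_
  rintro _ ⟨n, rfl⟩
  obtain ⟨m, rfl⟩ := hg n
  exact apply_mem_traceIdeal (f ∘ₗ g) m

lemma annihilator_le_traceIdeal_quotient (J : Ideal R) :
    J.annihilator ≤ traceIdeal R (R ⧸ J) := by
  intro a ha
  have hJ : J ≤ LinearMap.ker (LinearMap.toSpanSingleton R R a) := fun j hj => by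
    simpa [mul_comm] using Submodule.mem_annihilator.mp ha j hj
  have := apply_mem_traceIdeal (J.liftQ _ hJ) (Submodule.Quotient.mk (1 : R))
  rwa [Submodule.liftQ_apply, LinearMap.toSpanSingleton_apply, one_smul] at this

lemma exists_surjective_toQuotient_of_not_le {I J : Ideal R} [IsDomain (R ⧸ J)]
    [IsPrincipalIdealRing (R ⧸ J)] (h : ¬ I ≤ J) :
    ∃ f : I →ₗ[R] R ⧸ J, Function.Surjective f := by
  set d := Submodule.IsPrincipal.generator (I.map (Ideal.Quotient.mk J))
  have hspan : span {d} = I.map (Ideal.Quotient.mk J) :=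
    Submodule.IsPrincipal.span_singleton_generator _
  have hd : d ≠ 0 := by
    rintro hd
    rw [hd, span_singleton_zero, eq_comm, map_eq_bot_iff_le_ker, mk_ker] at hspan
    exact h hspan
  have hmem (w : I) : Ideal.Quotient.mk J w ∈ span {d} := hspan ▸ mem_map_of_mem _ w.2
  let e := (LinearEquiv.toSpanNonzeroSingleton (R ⧸ J) (R ⧸ J) d hd).symm
  let f : I →ₗ[R] R ⧸ J :=
    { toFun := fun w => e ⟨_, hmem w⟩
      map_add' := fun v w => by rw [← map_add]; rfl
      map_smul' := fun r w => by
        rw [RingHom.id_apply, Algebra.smul_def, Quotient.algebraMap_eq, ← smul_eq_mul, ← map_smul]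
        rfl }
  obtain ⟨w₀, hw₀, hw₀d⟩ := (mem_map_iff_of_surjective _ Quotient.mk_surjective).mp
    (hspan ▸ mem_span_singleton_self d)
  have hf : f ⟨w₀, hw₀⟩ = 1 := by
    simp only [f, LinearMap.coe_mk, AddHom.coe_mk, e, LinearEquiv.symm_apply_eq,
      LinearEquiv.toSpanNonzeroSingleton_one, hw₀d]
  refine ⟨f, fun q => ?_⟩
  obtain ⟨r, rfl⟩ := Quotient.mk_surjective q
  exact ⟨r • ⟨w₀, hw₀⟩, by rw [map_smul, hf, Algebra.smul_def, mul_one]; rfl⟩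

lemma annihilator_le_traceIdeal_of_not_le {I J : Ideal R} [IsDomain (R ⧸ J)]
    [IsPrincipalIdealRing (R ⧸ J)] (h : ¬ I ≤ J) : J.annihilator ≤ traceIdeal R I :=
  let ⟨f, hf⟩ := exists_surjective_toQuotient_of_not_le h
  (annihilator_le_traceIdeal_quotient J).trans (traceIdeal_le_of_surjective f hf)

end TraceIdeal

section LocalRing

variable {R : Type*} [CommRing R] [IsLocalRing R]

lemma eq_bot_or_eq_span_of_le_span_singleton {y : R}
    (hy : maximalIdeal R ≤ (span {y}).annihilator) {I : Ideal R} (hI : I ≤ span {y}) :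
    I = ⊥ ∨ I = span {y} := by
  refine or_iff_not_imp_left.mpr fun hbot => le_antisymm hI ?_
  obtain ⟨w, hwI, hw0⟩ := (Submodule.ne_bot_iff I).mp hbot
  obtain ⟨c, rfl⟩ := mem_span_singleton'.mp (hI hwI)
  have hc : IsUnit c := by
    by_contra hc
    exact hw0 ((Submodule.mem_annihilator_span_singleton y c).mp
      (hy ((mem_maximalIdeal c).mpr hc)))
  rw [span_singleton_le_iff_mem]
  simpa [← mul_assoc] using I.mul_mem_left (hc.unit⁻¹ : Rˣ) hwI

lemma maximalIdeal_eq_span_pair_of_ker_eq {A : Type*} [CommRing A] [IsLocalRing A] {x y : R}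
    (ρ : R →+* A) (hρ : Function.Surjective ρ)
    (hker : RingHom.ker ρ = span {y}) (hx : maximalIdeal A = span {ρ x}) :
    maximalIdeal R = span {x, y} := by
  have hcomap : comap ρ (maximalIdeal A) = span {x, y} := by
    rw [hx, ← Set.image_singleton, ← map_span, comap_map_of_surjective' ρ hρ, hker, span_insert]
  rw [← hcomap]
  exact (eq_maximalIdeal (comap_isMaximal_of_surjective ρ hρ)).symm

theorem setOf_traceIdeal_eq_self {x y : R} (hm : maximalIdeal R = span {x, y})
    (hxy : x * y = 0) (hyy : y * y = 0) (hy : y ≠ 0) (hx : x ∉ span {y})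
    [IsDomain (R ⧸ span {y})] [IsPrincipalIdealRing (R ⧸ span {y})] :
    {I : Ideal R | traceIdeal R I = I} = {⊥, span {y}, span {x, y}, ⊤} := by
  have hmy : maximalIdeal R = (span {y}).annihilator := by
    refine le_antisymm ?_ (le_maximalIdeal fun htop => hy ?_)
    · rw [hm, span_le, Set.insert_subset_iff, Set.singleton_subset_iff]
      exact ⟨(Submodule.mem_annihilator_span_singleton y x).mpr hxy,
        (Submodule.mem_annihilator_span_singleton y y).mpr hyy⟩
    · rw [← one_smul R y, ← Submodule.mem_annihilator_span_singleton, htop]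
      exact Submodule.mem_top
  have hannx : (span {x}).annihilator ≤ span {y} := fun c hc => by
    rw [Submodule.mem_annihilator_span_singleton, smul_eq_mul] at hc
    have hx' : Ideal.Quotient.mk (span {y}) x ≠ 0 := by rwa [ne_eq, Quotient.eq_zero_iff_mem]
    rw [← Quotient.eq_zero_iff_mem]
    simpa [hx'] using congrArg (Ideal.Quotient.mk (span {y})) hc
  ext I
  simp only [Set.mem_ofPred_eq, Set.mem_insert_iff, Set.mem_singleton_iff, traceIdeal_eq_self_iff]
  constructor
  · intro hI
    by_cases hIy : I ≤ span {y}
    · exact (eq_bot_or_eq_span_of_le_span_singleton hmy.le hIy).imp id Or.inl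
    refine Or.inr (Or.inr ((ne_or_eq I ⊤).imp_left fun htop => ?_))
    rw [← hm]
    exact le_antisymm (le_maximalIdeal htop)
      (hmy.le.trans ((annihilator_le_traceIdeal_of_not_le hIy).trans hI))
  · rintro (rfl | rfl | rfl | rfl)
    · refine (traceIdeal_le_annihilator_annihilator ⊥).trans ?_
      rw [Submodule.annihilator_bot, Submodule.annihilator_top, Module.annihilator_eq_bot.mpr]
      infer_instance
    · refine (traceIdeal_le_annihilator_annihilator _).trans
        ((Submodule.annihilator_mono ?_).trans hannx)
      rw [span_singleton_le_iff_mem, ← hmy, hm]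
      exact subset_span (Set.mem_insert x _)
    · rw [← hm]
      refine (traceIdeal_le_annihilator_annihilator _).trans
        ((Submodule.annihilator_mono ?_).trans hmy.ge)
      rw [span_singleton_le_iff_mem, Submodule.mem_annihilator]
      intro n hn
      rw [smul_eq_mul, mul_comm, ← smul_eq_mul, ← Submodule.mem_annihilator_span_singleton, ← hmy]
      exact hn
    · exact le_top

end LocalRing

lemma ker_killCompl_eq_span_X {σ τ A : Type*} [CommSemiring A] {e : σ ↪ τ} {t : τ}
    (he : Set.range e = {t}ᶜ) : RingHom.ker (killCompl (R := A) e) = span {X t} := by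
  refine le_antisymm (fun F hF => ?_) ?_
  · rw [mem_span_singleton, X_dvd_iff]
    intro m hm
    have hsupp : ↑m.support ⊆ Set.range e := by
      rw [he]
      rintro s hs rfl
      exact Finsupp.mem_support_iff.mp hs hm
    rw [← Finsupp.embDomain_comapDomain hsupp, ← coeff_killCompl, RingHom.mem_ker.mp hF, map_zero]
  · rw [span_le, Set.singleton_subset_iff]
    exact killCompl_X_eq_zero (by simp [he])

lemma X_notMem_span_X_mul_X_X_sq {σ A : Type*} [CommRing A] [Nontrivial A] (s t : σ) :
    (X t : MvPowerSeries σ A) ∉ span {X s * X t, X t ^ 2} := by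
  rw [mem_span_pair]
  rintro ⟨a, b, h⟩
  have hunit : a * X s + b * X t = 1 := by
    rw [← sub_eq_zero,
      ← mul_right_mem_nonZeroDivisors_eq_zero_iff (X_mem_nonzeroDivisors (i := t))]
    linear_combination h
  simpa using congrArg constantCoeff hunit

lemma exists_surjective_ker_eq_span_X_one {K R : Type*} [Field K] [CommRing R]
    {π : MvPowerSeries (Fin 2) K →+* R} (hπ : Function.Surjective π)
    (hker : RingHom.ker π = span {X 0 * X 1, X 1 ^ 2}) :
    ∃ ρ : R →+* PowerSeries K, Function.Surjective ρ ∧ RingHom.ker ρ = span {π (X 1)} ∧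
      ρ (π (X 0)) = PowerSeries.X := by
  let e : Unit ↪ Fin 2 := Function.Embedding.punit 0
  -- `killCompl e` is the substitution `X 0 ↦ X`, `X 1 ↦ 0`.
  let κ : MvPowerSeries (Fin 2) K →+* PowerSeries K := (killCompl e).toRingHom
  have hker' : RingHom.ker κ = span {X 1} :=
    ker_killCompl_eq_span_X (by ext i; fin_cases i <;> simp [e, Function.Embedding.punit])
  have hle : RingHom.ker π ≤ RingHom.ker κ := by
    rw [hker, hker', span_le, Set.insert_subset_iff, Set.singleton_subset_iff]
    exact ⟨mem_span_singleton.mpr (dvd_mul_left _ _),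
      mem_span_singleton.mpr (dvd_pow_self _ two_ne_zero)⟩
  let ρ := π.liftOfSurjective hπ ⟨κ, hle⟩
  have hρπ : ρ.comp π = κ := π.liftOfSurjective_comp hπ _
  refine ⟨ρ, fun f => ⟨π (rename e f), ?_⟩, ?_, ?_⟩
  · rw [← RingHom.comp_apply, hρπ]
    exact killCompl_rename_app f
  · rw [← map_comap_of_surjective π hπ (RingHom.ker ρ), RingHom.comap_ker, hρπ, hker', map_span,
      Set.image_singleton]
  · rw [← RingHom.comp_apply, hρπ]
    exact killCompl_X ()

/-- Let `R = K[[X, Y]]/(XY, Y²)` over a field `K`, with `x, y` the images of `X, Y`.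
Then the trace ideals of `R` are exactly `0`, `(y)`, `(x, y)` and `R`. -/
theorem traceIdeals_of_example (K : Type*) [Field K]
    (R : Type*) [CommRing R]
    (π : MvPowerSeries (Fin 2) K →+* R) (hπ : Function.Surjective π)
    (hker : RingHom.ker π =
      Ideal.span {MvPowerSeries.X 0 * MvPowerSeries.X 1, (MvPowerSeries.X 1) ^ 2})
    (x y : R) (hx : x = π (MvPowerSeries.X 0)) (hy : y = π (MvPowerSeries.X 1)) :
    {I : Ideal R | traceIdeal R I = I} =
      {⊥, Ideal.span {y}, Ideal.span {x, y}, ⊤} := by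
  subst hx hy
  have hxy : π (X 0) * π (X 1) = 0 := by
    rw [← map_mul, ← RingHom.mem_ker, hker]
    exact subset_span (Set.mem_insert _ _)
  have hyy : π (X 1) * π (X 1) = 0 := by
    rw [← map_mul, ← sq, ← RingHom.mem_ker, hker]
    exact subset_span (Set.mem_insert_of_mem _ rfl)
  have hy : π (X 1) ≠ 0 := by
    rw [ne_eq, ← RingHom.mem_ker, hker]
    exact X_notMem_span_X_mul_X_X_sq 0 1
  obtain ⟨ρ, hρ, hkerρ, hρx⟩ := exists_surjective_ker_eq_span_X_one hπ hker
  have hx : π (X 0) ∉ span {π (X 1)} := by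
    rw [← hkerρ, RingHom.mem_ker, hρx]
    exact PowerSeries.X_ne_zero
  have : Nontrivial R := nontrivial_of_ne _ _ hy
  have : IsLocalRing R := .of_surjective' π hπ
  let e : R ⧸ span {π (X 1)} ≃+* PowerSeries K :=
    (quotEquivOfEq hkerρ.symm).trans (RingHom.quotientKerEquivOfSurjective hρ)
  have : IsDomain (R ⧸ span {π (X 1)}) := e.toMulEquiv.isDomain
  have : IsPrincipalIdealRing (R ⧸ span {π (X 1)}) := .of_surjective e.symm e.symm.surjective
  have hm : maximalIdeal R = span {π (X 0), π (X 1)} :=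
    maximalIdeal_eq_span_pair_of_ker_eq ρ hρ hkerρ (by rw [hρx, PowerSeries.maximalIdeal_eq_span_X])
  exact setOf_traceIdeal_eq_self hm hxy hyy hy hx
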